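/- arXiv:1307.2323 — 6 statements merged into one kernel-verified Lean document; each statement's English description precedes it below -/
import Mathlib

section
/- Let ρ and π be density matrices on ℂ^n with ρ ≠ π and with the range (column space) of π contained in the range of ρ. Then there exists a constant k > 0 such that σ := ρ + (k / D(ρ,π))·(ρ − π) is a density matrix and rank σ < rank ρ. -/
open Matrix
open scoped ComplexOrder

/-- A density matrix on ℂ^n: positive semidefinite with trace 1. -/
def IsDensityMatrix {n : ℕ} (ρ : Matrix (Fin n) (Fin n) ℂ) : Prop :=
  ρ.PosSemidef ∧ ρ.trace = 1

/-- The trace distance between two matrices whose difference is Hermitian: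
half the sum of the absolute values of the eigenvalues of the difference. -/
noncomputable def traceDist {n : ℕ} (ρ π : Matrix (Fin n) (Fin n) ℂ) : ℝ :=
  if h : (ρ - π).IsHermitian then (1 / 2) * ∑ i, |h.eigenvalues i| else 0

/-!
Follow the segment `σ t = ρ + t • (ρ - π)` from `t = 0`. Since `ρ - π` is a nonzero traceless
Hermitian matrix it is not positive semidefinite, so the segment leaves the positive cone, and
there is a largest `t` with `σ t ≥ 0`. Every `σ t` vanishes on `ker ρ ⊆ ker π`. If `ker σ t`
were no larger than `ker ρ`, then `π ≤ c • σ t` for some `c > 0` (write `σ t = Bᴴ B`,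
`π = Cᴴ C`, factor `C = X B` and use `Xᴴ X ≤ ‖X‖²`), and the segment would stay positive a little
beyond `t`. So `ker σ t ⊋ ker ρ` and the rank drops; the same argument at `t = 0` shows `t > 0`.
Finally take `k = t · D(ρ, π)`.
-/

open Filter Topology
open scoped MatrixOrder

theorem LinearMap.exists_comp_eq_of_ker_le {K V V₁ V₂ : Type*} [Field K] [AddCommGroup V]
    [Module K V] [AddCommGroup V₁] [Module K V₁] [AddCommGroup V₂] [Module K V₂]
    (f : V →ₗ[K] V₁) (g : V →ₗ[K] V₂) (h : LinearMap.ker f ≤ LinearMap.ker g) :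
    ∃ l : V₁ →ₗ[K] V₂, l ∘ₗ f = g := by
  obtain ⟨l, hl⟩ := ((LinearMap.ker f).liftQ f le_rfl).exists_leftInverse_of_injective
    (Submodule.ker_liftQ_eq_bot _ _ _ le_rfl)
  refine ⟨(LinearMap.ker f).liftQ g h ∘ₗ l, LinearMap.ext fun x => ?_⟩
  have hx : l (f x) = (LinearMap.ker f).mkQ x := LinearMap.congr_fun hl ((LinearMap.ker f).mkQ x)
  simp [hx]

namespace Matrix

variable {n : Type*} [Fintype n]

theorem exists_mul_eq_of_ker_le {m p K : Type*} [Field K] [Fintype m] [DecidableEq m]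
    [DecidableEq n] (A : Matrix m n K) (B : Matrix p n K)
    (h : LinearMap.ker A.mulVecLin ≤ LinearMap.ker B.mulVecLin) :
    ∃ X : Matrix p m K, X * A = B := by
  obtain ⟨l, hl⟩ := LinearMap.exists_comp_eq_of_ker_le _ _ h
  refine ⟨LinearMap.toMatrix' l, ?_⟩
  have := congrArg LinearMap.toMatrix' hl
  rwa [LinearMap.toMatrix'_comp, ← toLin'_apply', ← toLin'_apply', LinearMap.toMatrix'_toLin',
    LinearMap.toMatrix'_toLin'] at this

theorem rank_lt_rank_of_ker_lt {m K : Type*} [Field K] {A B : Matrix m n K}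
    (h : LinearMap.ker A.mulVecLin < LinearMap.ker B.mulVecLin) : B.rank < A.rank := by
  have hker := Submodule.finrank_lt_finrank_of_lt h
  have hA := LinearMap.finrank_range_add_finrank_ker A.mulVecLin
  have hB := LinearMap.finrank_range_add_finrank_ker B.mulVecLin
  unfold rank
  omega

theorem IsHermitian.ker_mulVecLin_le_of_range_le {A B : Matrix n n ℂ} (hA : A.IsHermitian)
    (hB : B.PosSemidef) (h : LinearMap.range B.mulVecLin ≤ LinearMap.range A.mulVecLin) :
    LinearMap.ker A.mulVecLin ≤ LinearMap.ker B.mulVecLin := by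
  intro v hv
  rw [LinearMap.mem_ker, mulVecLin_apply] at hv ⊢
  obtain ⟨u, hu⟩ := h (LinearMap.mem_range_self B.mulVecLin v)
  simp only [mulVecLin_apply] at hu
  rw [← hB.dotProduct_mulVec_zero_iff, ← hu, dotProduct_mulVec, ← hA.eq, vecMul_conjTranspose,
    star_star, hv, star_zero, zero_dotProduct]

theorem isClosed_setOf_posSemidef : IsClosed {A : Matrix n n ℂ | A.PosSemidef} := by
  have : {A : Matrix n n ℂ | A.PosSemidef} =
      {A | Aᴴ = A} ∩ ⋂ v : n → ℂ, {A | 0 ≤ star v ⬝ᵥ A *ᵥ v} := by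
    ext A
    simp [posSemidef_iff_dotProduct_mulVec, IsHermitian]
  rw [this]
  exact (isClosed_eq (by fun_prop) (by fun_prop)).inter
    (isClosed_iInter fun v => isClosed_le continuous_const (by fun_prop))

theorem PosSemidef.of_frequently_add_smul {A Δ : Matrix n n ℂ}
    (h : ∃ᶠ t : ℝ in atTop, (A + t • Δ).PosSemidef) : Δ.PosSemidef := by
  have hlim : Tendsto (fun t : ℝ => t⁻¹ • A + Δ) atTop (𝓝 Δ) := by
    simpa using ((tendsto_inv_atTop_zero (𝕜 := ℝ)).smul_const A).add_const Δ
  refine isClosed_setOf_posSemidef.mem_of_frequently_of_tendsto ?_ hlim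
  refine (h.and_eventually (eventually_gt_atTop 0)).mono fun t ⟨ht, hpos⟩ => ?_
  have := ht.smul (inv_nonneg.mpr hpos.le)
  rwa [smul_add, smul_smul, inv_mul_cancel₀ hpos.ne', one_smul] at this

theorem PosSemidef.exists_isGreatest_add_smul {A Δ : Matrix n n ℂ} (hA : A.PosSemidef)
    (hΔ : ¬ Δ.PosSemidef) :
    ∃ t, IsGreatest {t : ℝ | 0 ≤ t ∧ (A + t • Δ).PosSemidef} t := by
  set S := {t : ℝ | 0 ≤ t ∧ (A + t • Δ).PosSemidef}
  have hclosed : IsClosed S :=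
    isClosed_Ici.inter (isClosed_setOf_posSemidef.preimage (by fun_prop))
  have hbdd : BddAbove S := by
    by_contra hS
    refine hΔ (PosSemidef.of_frequently_add_smul (A := A) (frequently_atTop.mpr fun a => ?_))
    obtain ⟨t, ht, hat⟩ := not_bddAbove_iff.mp hS a
    exact ⟨t, hat.le, ht.2⟩
  have hne : S.Nonempty := ⟨0, le_rfl, by simpa using hA⟩
  exact ⟨sSup S, hclosed.csSup_mem hne hbdd, fun t ht => le_csSup hbdd ht⟩

variable [DecidableEq n]

open scoped Matrix.Norms.L2Operator in
theorem PosSemidef.exists_le_smul_of_ker_le {M N : Matrix n n ℂ} (hM : M.PosSemidef)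
    (hN : N.PosSemidef) (h : LinearMap.ker M.mulVecLin ≤ LinearMap.ker N.mulVecLin) :
    ∃ c : ℝ, 0 < c ∧ N ≤ c • M := by
  obtain ⟨B, rfl⟩ := CStarAlgebra.nonneg_iff_eq_star_mul_self.mp hM.nonneg
  obtain ⟨C, rfl⟩ := CStarAlgebra.nonneg_iff_eq_star_mul_self.mp hN.nonneg
  simp only [star_eq_conjTranspose, ker_mulVecLin_conjTranspose_mul_self] at h
  obtain ⟨X, rfl⟩ := exists_mul_eq_of_ker_le B C h
  refine ⟨‖X‖ ^ 2 + 1, by positivity, ?_⟩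
  calc star (X * B) * (X * B) = star B * (star X * X) * B := by simp [star_mul, mul_assoc]
    _ ≤ star B * algebraMap ℝ _ (‖X‖ ^ 2) * B :=
        star_left_conjugate_le_conjugate CStarAlgebra.star_mul_le_algebraMap_norm_sq B
    _ = (‖X‖ ^ 2) • (star B * B) := by simp [Algebra.algebraMap_eq_smul_one]
    _ ≤ (‖X‖ ^ 2 + 1) • (star B * B) := by
        rw [add_smul, one_smul]
        exact le_add_of_nonneg_right (star_mul_self_nonneg B)

theorem PosSemidef.exists_posSemidef_add_smul_sub {A R B : Matrix n n ℂ} (hA : A.PosSemidef)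
    (hR : R.PosSemidef) (hB : B.PosSemidef)
    (h : LinearMap.ker A.mulVecLin ≤ LinearMap.ker B.mulVecLin) :
    ∃ s : ℝ, 0 < s ∧ (A + s • (R - B)).PosSemidef := by
  obtain ⟨c, hc, hBA⟩ := hA.exists_le_smul_of_ker_le hB h
  refine ⟨c⁻¹, inv_pos.mpr hc, ?_⟩
  have hsplit : A + c⁻¹ • (R - B) = c⁻¹ • R + c⁻¹ • (c • A - B) := by
    rw [smul_sub c⁻¹ (c • A), smul_smul, inv_mul_cancel₀ hc.ne', one_smul, smul_sub]
    abel
  rw [hsplit]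
  exact (hR.smul (inv_nonneg.mpr hc.le)).add (hBA.smul (inv_nonneg.mpr hc.le))

theorem PosSemidef.exists_rank_lt_add_smul_sub {ρ π : Matrix n n ℂ} (hρ : ρ.PosSemidef)
    (hπ : π.PosSemidef) (hker : LinearMap.ker ρ.mulVecLin ≤ LinearMap.ker π.mulVecLin)
    (hnot : ¬ (ρ - π).PosSemidef) :
    ∃ t : ℝ, 0 < t ∧ (ρ + t • (ρ - π)).PosSemidef ∧ (ρ + t • (ρ - π)).rank < ρ.rank := by
  obtain ⟨t, ⟨ht0, ht⟩, hmax⟩ := hρ.exists_isGreatest_add_smul hnot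
  have hstuck : ¬ LinearMap.ker (ρ + t • (ρ - π)).mulVecLin ≤ LinearMap.ker π.mulVecLin := by
    intro h
    obtain ⟨s, hs, hts⟩ := ht.exists_posSemidef_add_smul_sub hρ hπ h
    rw [add_assoc, ← add_smul] at hts
    linarith [hmax ⟨by linarith, hts⟩]
  have hpos : 0 < t := by
    refine ht0.lt_of_ne fun h => hstuck ?_
    simpa [← h] using hker
  have hker_le : LinearMap.ker ρ.mulVecLin ≤ LinearMap.ker (ρ + t • (ρ - π)).mulVecLin := by
    intro v hv
    have hπv : π *ᵥ v = 0 := hker hv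
    simp only [LinearMap.mem_ker, mulVecLin_apply] at hv ⊢
    rw [add_mulVec, smul_mulVec, sub_mulVec, hv, hπv, sub_zero, smul_zero, add_zero]
  refine ⟨t, hpos, ht, rank_lt_rank_of_ker_lt (lt_of_le_not_ge hker_le fun h => ?_)⟩
  exact hstuck (h.trans hker)

end Matrix

theorem traceDist_pos {n : ℕ} {ρ π : Matrix (Fin n) (Fin n) ℂ} (h : (ρ - π).IsHermitian)
    (hne : ρ ≠ π) : 0 < traceDist ρ π := by
  rw [traceDist, dif_pos h]
  obtain ⟨i, hi⟩ : ∃ i, h.eigenvalues i ≠ 0 := by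
    by_contra! h0
    exact sub_ne_zero.mpr hne (h.eigenvalues_eq_zero_iff.mp (funext h0))
  exact mul_pos one_half_pos
    (Finset.sum_pos' (fun j _ => abs_nonneg _) ⟨i, Finset.mem_univ i, abs_pos.mpr hi⟩)

theorem stmt_2 {n : ℕ} (ρ π : Matrix (Fin n) (Fin n) ℂ)
    (hρ : IsDensityMatrix ρ) (hπ : IsDensityMatrix π) (hne : ρ ≠ π)
    (hrange : LinearMap.range π.mulVecLin ≤ LinearMap.range ρ.mulVecLin) :
    ∃ k : ℝ, 0 < k ∧
      IsDensityMatrix (ρ + ((k / traceDist ρ π : ℝ) : ℂ) • (ρ - π)) ∧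
      (ρ + ((k / traceDist ρ π : ℝ) : ℂ) • (ρ - π)).rank < ρ.rank := by
  obtain ⟨hρ, hρtr⟩ := hρ
  obtain ⟨hπ, hπtr⟩ := hπ
  have htr : (ρ - π).trace = 0 := by rw [trace_sub, hρtr, hπtr, sub_self]
  have hnot : ¬ (ρ - π).PosSemidef := fun h => sub_ne_zero.mpr hne (h.trace_eq_zero_iff.mp htr)
  obtain ⟨t, ht, hσ, hrank⟩ := hρ.exists_rank_lt_add_smul_sub hπ
    (hρ.isHermitian.ker_mulVecLin_le_of_range_le hπ hrange) hnot
  have hD := traceDist_pos (hρ.isHermitian.sub hπ.isHermitian) hne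
  refine ⟨t * traceDist ρ π, mul_pos ht hD, ?_⟩
  rw [mul_div_cancel_right₀ t hD.ne', Complex.coe_smul]
  exact ⟨⟨hσ, by rw [trace_add, trace_smul, htr, smul_zero, add_zero, hρtr]⟩, hrank⟩
end

section
/- Let ρ and π be density matrices on ℂ^n with ρ ≠ π and with the range of π contained in the range of ρ. Then there exists p > 0 such that ρ + p·(ρ − π) is positive semidefinite, while ρ + q·(ρ − π) fails to be positive semidefinite for every q > p. -/
open Matrix
open scoped ComplexOrder

/-!
Positivity of `ρ + p • (ρ - π)` means `0 ≤ ⟪x, ρ x⟫ + p ⟪x, (ρ - π) x⟫` for every `x`, so the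
admissible `p` form a closed set of reals. It is bounded above because `ρ - π` is a nonzero
matrix of trace zero, hence not positive semidefinite. It contains some `ε > 0` because the
range condition makes `π` dominated by a multiple of `ρ`: writing `π = ρ N`, we get
`π ^ 2 = ρ N Nᴴ ρ ≤ ‖N‖ ^ 2 ρ ^ 2`, and the square root is operator monotone.
The supremum of the admissible set is the required `p`.
-/

theorem exists_pos_isGreatest_setOf_nonneg_add_mul {X : Type*} (r s : X → ℝ)
    (hε : ∃ ε > 0, ∀ x, 0 ≤ r x + ε * s x) (hs : ∃ x, s x < 0) :
    ∃ p > 0, IsGreatest {p | ∀ x, 0 ≤ r x + p * s x} p := by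
  obtain ⟨ε, hε, hεS⟩ := hε
  obtain ⟨x₀, hx₀⟩ := hs
  set S := {p : ℝ | ∀ x, 0 ≤ r x + p * s x}
  have hclosed : IsClosed S := by
    simp only [S, Set.ofPred_forall]
    exact isClosed_iInter fun x => isClosed_le continuous_const (by fun_prop)
  have hbdd : BddAbove S := ⟨r x₀ / -s x₀, fun p hp => by
    rw [le_div_iff₀ (neg_pos.2 hx₀)]; linarith [hp x₀]⟩
  exact ⟨sSup S, hε.trans_le (le_csSup hbdd hεS),
    hclosed.csSup_mem ⟨ε, hεS⟩ hbdd, fun _ hq => le_csSup hbdd hq⟩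

namespace Matrix

theorem exists_eq_mul_of_range_le {m n R : Type*} [Fintype n] [DecidableEq n] [CommRing R]
    {A B : Matrix m n R} (h : LinearMap.range A.mulVecLin ≤ LinearMap.range B.mulVecLin) :
    ∃ N : Matrix n n R, A = B * N := by
  obtain ⟨f, hf⟩ := Module.projective_lifting_property B.mulVecLin.rangeRestrict
    (A.mulVecLin.codRestrict _ fun x => h ⟨x, rfl⟩) (LinearMap.surjective_rangeRestrict _)
  refine ⟨LinearMap.toMatrix' f, toLin'.injective ?_⟩
  rw [toLin'_apply', toLin'_apply', mulVecLin_mul]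
  refine LinearMap.ext fun x => ?_
  simpa using congr(Subtype.val ($hf x)).symm

section RCLike

variable {n 𝕜 : Type*} [Fintype n] [RCLike 𝕜]

theorem IsHermitian.posSemidef_iff_re_nonneg {A : Matrix n n 𝕜} (hA : A.IsHermitian) :
    A.PosSemidef ↔ ∀ x, 0 ≤ RCLike.re (star x ⬝ᵥ A *ᵥ x) :=
  ⟨fun h x => h.re_dotProduct_nonneg x, fun h => .of_dotProduct_mulVec_nonneg hA fun x =>
    RCLike.nonneg_iff.2 ⟨h x, hA.im_star_dotProduct_mulVec_self x⟩⟩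

theorem re_dotProduct_add_smul_mulVec (A B : Matrix n n 𝕜) (p : ℝ) (x : n → 𝕜) :
    RCLike.re (star x ⬝ᵥ (A + (p : 𝕜) • B) *ᵥ x) =
      RCLike.re (star x ⬝ᵥ A *ᵥ x) + p * RCLike.re (star x ⬝ᵥ B *ᵥ x) := by
  rw [add_mulVec, dotProduct_add, smul_mulVec, dotProduct_smul, map_add, smul_eq_mul,
    RCLike.re_ofReal_mul]

theorem IsHermitian.posSemidef_add_smul_iff {A B : Matrix n n 𝕜} (hA : A.IsHermitian)
    (hB : B.IsHermitian) (p : ℝ) :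
    (A + (p : 𝕜) • B).PosSemidef ↔
      ∀ x, 0 ≤ RCLike.re (star x ⬝ᵥ A *ᵥ x) + p * RCLike.re (star x ⬝ᵥ B *ᵥ x) := by
  simp only [← re_dotProduct_add_smul_mulVec]
  exact (hA.add (hB.smul (RCLike.conj_ofReal p))).posSemidef_iff_re_nonneg

theorem not_posSemidef_sub_of_trace_eq {A B : Matrix n n 𝕜} (hne : A ≠ B)
    (htr : A.trace = B.trace) : ¬ (A - B).PosSemidef := fun h =>
  hne (sub_eq_zero.1 (h.trace_eq_zero_iff.1 (by rw [trace_sub, htr, sub_self])))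

end RCLike

section Complex

variable {n : Type*} [Fintype n] [DecidableEq n]
open scoped MatrixOrder

open scoped Matrix.Norms.L2Operator in
theorem PosSemidef.exists_le_smul_of_range_le {A B : Matrix n n ℂ}
    (hA : A.PosSemidef) (hB : B.PosSemidef)
    (h : LinearMap.range A.mulVecLin ≤ LinearMap.range B.mulVecLin) :
    ∃ c : ℝ, 0 ≤ c ∧ A ≤ c • B := by
  obtain ⟨N, hN⟩ := exists_eq_mul_of_range_le h
  have hAs : star A = A := hA.1
  have hBs : star B = B := hB.1
  have hsq : A * A ≤ (‖N‖ • B) * (‖N‖ • B) := calc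
    A * A = B * (N * star N) * star B := by
      nth_rw 2 [← hAs]
      rw [hN, star_mul, mul_assoc, mul_assoc, mul_assoc]
    _ ≤ B * algebraMap ℝ _ (‖N‖ ^ 2) * star B :=
      star_right_conjugate_le_conjugate CStarAlgebra.mul_star_le_algebraMap_norm_sq B
    _ = (‖N‖ • B) * (‖N‖ • B) := by
      rw [hBs, Algebra.algebraMap_eq_smul_one, mul_smul_one, smul_mul_smul, sq, smul_mul_assoc]
  have hNB : 0 ≤ ‖N‖ • B := smul_nonneg (norm_nonneg N) (nonneg_iff_posSemidef.2 hB)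
  refine ⟨‖N‖, norm_nonneg N, ?_⟩
  rw [← CFC.sqrt_mul_self A (nonneg_iff_posSemidef.2 hA), ← CFC.sqrt_mul_self _ hNB]
  exact CFC.sqrt_le_sqrt _ _ hsq

theorem PosSemidef.exists_pos_posSemidef_add_smul_sub {A B : Matrix n n ℂ}
    (hA : A.PosSemidef) (hB : B.PosSemidef)
    (h : LinearMap.range A.mulVecLin ≤ LinearMap.range B.mulVecLin) :
    ∃ ε : ℝ, 0 < ε ∧ (B + (ε : ℂ) • (B - A)).PosSemidef := by
  obtain ⟨c, hc, hAB⟩ := hA.exists_le_smul_of_range_le hB h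
  set ε := (c + 1)⁻¹
  have hε : (ε : ℂ) * (c + 1) = 1 := by
    push_cast [ε]; exact inv_mul_cancel₀ (by norm_cast; positivity)
  have hdecomp : B + (ε : ℂ) • (B - A) = ε • (B + B + (c • B - A)) := by
    simp only [RCLike.real_smul_eq_coe_smul (K := ℂ)]
    linear_combination (norm := module) -(hε • B)
  refine ⟨ε, by positivity, ?_⟩
  rw [hdecomp]
  exact ((hB.add hB).add (le_iff.1 hAB)).smul (by positivity)

end Complex

end Matrix

theorem stmt_6 {n : ℕ} (ρ π : Matrix (Fin n) (Fin n) ℂ)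
    (hρ : IsDensityMatrix ρ) (hπ : IsDensityMatrix π) (hne : ρ ≠ π)
    (hrange : LinearMap.range π.mulVecLin ≤ LinearMap.range ρ.mulVecLin) :
    ∃ p : ℝ, 0 < p ∧ (ρ + ((p : ℝ) : ℂ) • (ρ - π)).PosSemidef ∧
      ∀ q : ℝ, p < q → ¬ (ρ + ((q : ℝ) : ℂ) • (ρ - π)).PosSemidef := by
  obtain ⟨hρ, hρtr⟩ := hρ
  obtain ⟨hπ, hπtr⟩ := hπ
  have hsub : (ρ - π).IsHermitian := hρ.1.sub hπ.1
  have key := hρ.1.posSemidef_add_smul_iff hsub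
  have hneg : ∃ x, RCLike.re (star x ⬝ᵥ (ρ - π) *ᵥ x) < 0 := by
    by_contra! h
    exact not_posSemidef_sub_of_trace_eq hne (hρtr.trans hπtr.symm)
      (hsub.posSemidef_iff_re_nonneg.2 h)
  obtain ⟨ε, hε, hεpsd⟩ := hπ.exists_pos_posSemidef_add_smul_sub hρ hrange
  obtain ⟨p, hp, hpmem, hpmax⟩ :=
    exists_pos_isGreatest_setOf_nonneg_add_mul _ _ ⟨ε, hε, (key ε).1 hεpsd⟩ hneg
  exact ⟨p, hp, (key p).2 hpmem, fun q hpq hq => (hpmax ((key q).1 hq)).not_gt hpq⟩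
end

section
/- Let P be a homogeneous multivariate polynomial of degree D ≥ 1 in n complex variables, and let ρ be a density matrix on ℂ^n with rank ρ ≥ 2 (i.e., ρ is a mixed state). Then there exists a unit vector ψ in the range (column space) of ρ such that P(ψ) = 0. -/
/-!
The range of `ρ` contains two independent vectors `u`, `v`, so it suffices to find a nontrivial
zero of the binary form `(a, b) ↦ P (a • u + b • v)`. If there were none, the one-variable
polynomials `t ↦ P (u + t • v)` and `t ↦ P (v + t • u)` would have no roots, hence be constant
over an algebraically closed field; homogeneity then forces `P v = t ^ D * P u` for every
`t ≠ 0`, with `P u ≠ 0`, which is absurd as soon as `D ≥ 1`. Normalising the zero found gives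
the unit vector.
-/

open Matrix
open scoped ComplexOrder

namespace MvPolynomial

variable {R σ : Type*} [CommSemiring R] {P : MvPolynomial σ R} {D : ℕ}

theorem IsHomogeneous.eval_smul (hP : P.IsHomogeneous D) (c : R) (x : σ → R) :
    eval (c • x) P = c ^ D * eval x P := by
  simp only [eval_eq, Finset.mul_sum, Pi.smul_apply, smul_eq_mul, mul_pow,
    Finset.prod_mul_distrib, Finset.prod_pow_eq_pow_sum]
  refine Finset.sum_congr rfl fun d hd => ?_
  rw [← hP.degree_eq_sum_deg_support hd]
  ring

noncomputable def restrictLine (P : MvPolynomial σ R) (u v : σ → R) : Polynomial R :=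
  aeval (fun i => Polynomial.C (u i) + Polynomial.C (v i) * Polynomial.X) P

theorem eval_restrictLine (P : MvPolynomial σ R) (u v : σ → R) (t : R) :
    (restrictLine P u v).eval t = eval (u + t • v) P := by
  have hline : (fun i => Polynomial.aeval t (.C (u i) + .C (v i) * .X)) = u + t • v := by
    funext i
    simp only [map_add, map_mul, Polynomial.aeval_C, Polynomial.aeval_X, Pi.add_apply,
      Pi.smul_apply, smul_eq_mul, Algebra.algebraMap_self_apply]
    ring
  rw [restrictLine, ← Polynomial.coe_aeval_eq_eval, ← AlgHom.comp_apply, comp_aeval, hline]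
  rfl

section IsAlgClosed

variable {K : Type*} [Field K] [IsAlgClosed K] {P : MvPolynomial σ K}

theorem eval_add_smul_eq_of_forall_ne_zero {u v : σ → K}
    (h : ∀ t : K, eval (u + t • v) P ≠ 0) (t : K) : eval (u + t • v) P = eval u P := by
  have hdeg : (restrictLine P u v).degree ≤ 0 := by
    by_contra hpos
    obtain ⟨s, hs⟩ := IsAlgClosed.exists_root _ (ne_of_gt (not_le.mp hpos))
    exact h s (eval_restrictLine P u v s ▸ hs)
  have hconst := congrArg (Polynomial.eval t) (Polynomial.eq_C_of_degree_le_zero hdeg)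
  rwa [Polynomial.eval_C, Polynomial.coeff_zero_eq_eval_zero, eval_restrictLine,
    eval_restrictLine, zero_smul, add_zero] at hconst

theorem IsHomogeneous.exists_eval_smul_add_smul_eq_zero (hP : P.IsHomogeneous D) (hD : D ≠ 0)
    (u v : σ → K) : ∃ a b : K, (a ≠ 0 ∨ b ≠ 0) ∧ eval (a • u + b • v) P = 0 := by
  classical
  by_contra! hne
  have hu : ∀ t : K, eval (u + t • v) P = eval u P :=
    eval_add_smul_eq_of_forall_ne_zero fun t => by simpa using hne 1 t (.inl one_ne_zero)
  have hv : ∀ t : K, eval (v + t • u) P = eval v P :=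
    eval_add_smul_eq_of_forall_ne_zero fun t => by
      simpa [add_comm] using hne t 1 (.inr one_ne_zero)
  have hPu : eval u P ≠ 0 := by simpa using hne 1 0 (.inl one_ne_zero)
  have hscale : ∀ t : K, t ≠ 0 → eval v P = t ^ D * eval u P := by
    intro t ht
    rw [← hv t, ← hu t⁻¹, ← hP.eval_smul, smul_add, smul_smul, mul_inv_cancel₀ ht, one_smul,
      add_comm]
  obtain ⟨a, ha⟩ := Infinite.exists_notMem_finset ({0, 1} : Finset K)
  obtain ⟨t, rfl⟩ := IsAlgClosed.exists_pow_nat_eq a (Nat.pos_of_ne_zero hD)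
  simp only [Finset.mem_insert, Finset.mem_singleton, not_or] at ha
  have ht : t ≠ 0 := fun h => ha.1 (by rw [h, zero_pow hD])
  have := (hscale 1 one_ne_zero).symm.trans (hscale t ht)
  rw [one_pow] at this
  exact ha.2 (mul_right_cancel₀ hPu this.symm)

theorem IsHomogeneous.exists_ne_zero_eval_eq_zero (hP : P.IsHomogeneous D) (hD : D ≠ 0)
    {W : Submodule K (σ → K)} (hW : 2 ≤ Module.finrank K W) :
    ∃ w ∈ W, w ≠ 0 ∧ eval w P = 0 := by
  obtain ⟨f, hf⟩ := exists_linearIndependent_of_le_finrank hW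
  have hf2 : f = ![f 0, f 1] := by ext i; fin_cases i <;> rfl
  rw [hf2, LinearIndependent.pair_iff] at hf
  obtain ⟨a, b, hab, hPab⟩ := hP.exists_eval_smul_add_smul_eq_zero hD (f 0 : σ → K) (f 1)
  refine ⟨a • f 0 + b • f 1, W.add_mem (W.smul_mem a (f 0).2) (W.smul_mem b (f 1).2), ?_, hPab⟩
  intro h0
  have := hf a b (Subtype.ext h0)
  tauto

end IsAlgClosed
end MvPolynomial

theorem exists_star_smul_dotProduct_smul_eq_one {𝕜 ι : Type*} [RCLike 𝕜] [Fintype ι]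
    {w : ι → 𝕜} (hw : w ≠ 0) : ∃ c : 𝕜, star (c • w) ⬝ᵥ (c • w) = 1 := by
  set x : EuclideanSpace 𝕜 ι := WithLp.toLp 2 w
  have hx : x ≠ 0 := by simpa [x] using hw
  refine ⟨(‖x‖⁻¹ : 𝕜), ?_⟩
  have h := inner_self_eq_norm_sq_to_K (𝕜 := 𝕜) ((‖x‖⁻¹ : 𝕜) • x)
  rw [norm_smul_inv_norm hx, EuclideanSpace.inner_eq_star_dotProduct, dotProduct_comm] at h
  simpa [x] using h

theorem stmt_9_general {n : ℕ} (P : MvPolynomial (Fin n) ℂ) (D : ℕ) (hD : 1 ≤ D)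
    (hP : P.IsHomogeneous D) (ρ : Matrix (Fin n) (Fin n) ℂ)
    (hrank : 2 ≤ ρ.rank) :
    ∃ ψ : Fin n → ℂ, star ψ ⬝ᵥ ψ = 1 ∧ ψ ∈ LinearMap.range ρ.mulVecLin ∧
      MvPolynomial.eval ψ P = 0 := by
  obtain ⟨w, hwρ, hw0, hPw⟩ := hP.exists_ne_zero_eval_eq_zero (by omega) hrank
  obtain ⟨c, hc⟩ := exists_star_smul_dotProduct_smul_eq_one hw0
  exact ⟨c • w, hc, Submodule.smul_mem _ c hwρ, by rw [hP.eval_smul, hPw, mul_zero]⟩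

theorem stmt_9 {n : ℕ} (P : MvPolynomial (Fin n) ℂ) (D : ℕ) (hD : 1 ≤ D)
    (hP : P.IsHomogeneous D) (ρ : Matrix (Fin n) (Fin n) ℂ)
    (hρ : IsDensityMatrix ρ) (hrank : 2 ≤ ρ.rank) :
    ∃ ψ : Fin n → ℂ, star ψ ⬝ᵥ ψ = 1 ∧ ψ ∈ LinearMap.range ρ.mulVecLin ∧
      MvPolynomial.eval ψ P = 0 :=
  stmt_9_general P D hD hP ρ hrank
end

section
/- Let P be a homogeneous multivariate polynomial of degree D ≥ 1 in n complex variables, and let ρ be a density matrix on ℂ^n. Then there exists a finite pure-state ensemble for ρ containing at most one state on which P is nonzero: that is, there exist m ∈ ℕ, weights p_1, …, p_m > 0 with Σ_i p_i = 1, and unit vectors ψ_1, …, ψ_m ∈ ℂ^n with ρ = Σ_i p_i ψ_i ψ_i†, such that P(ψ_i) = 0 for all indices i except possibly one. -/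
open Matrix
open scoped ComplexOrder

/-!
Write `ρ = ∑ xᵢ xᵢ†` with unnormalised vectors `xᵢ`. If `|a|² + |b|² = 1`, the pair
`a x + b y, -b̄ x + ā y` has the same `x x† + y y†` as the pair `x, y`. Restricted to the plane
spanned by `x, y`, the homogeneous polynomial `P` of positive degree is a binary form, which over
`ℂ` has a nontrivial zero `(a, b)`, normalisable to `|a|² + |b|² = 1`. So a remainder vector can be
exchanged against each `xᵢ` in turn, leaving a zero of `P` behind each time. Dropping the zero
vectors and normalising the others yields the ensemble.
-/

open ComplexConjugate

namespace MvPolynomial.IsHomogeneous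

variable {σ : Type*}

theorem eval_smul_s10 {R : Type*} [CommSemiring R] {φ : MvPolynomial σ R} {n : ℕ}
    (hφ : φ.IsHomogeneous n) (c : R) (x : σ → R) :
    eval (c • x) φ = c ^ n * eval x φ := by
  rw [eval_eq, eval_eq, Finset.mul_sum]
  refine Finset.sum_congr rfl fun d hd => ?_
  rw [hφ.degree_eq_sum_deg_support hd, ← Finset.prod_pow_eq_pow_sum]
  simp only [Pi.smul_apply, smul_eq_mul, mul_pow, Finset.prod_mul_distrib]
  ring

variable {K : Type*} [NontriviallyNormedField K] {φ : MvPolynomial σ K} {n : ℕ}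

theorem eval_eq_zero_of_forall_eval_add_smul_eq (hφ : φ.IsHomogeneous n) (hn : n ≠ 0)
    {u v : σ → K} (h : ∀ t : K, eval (u + t • v) φ = eval u φ) : eval v φ = 0 := by
  -- `s ↦ φ(s u + v)` is continuous and equals `s ↦ sⁿ φ(u)` away from `0`; evaluate at `s = 0`.
  have hscale : Set.EqOn (fun s : K => eval (s • u + v) φ) (fun s => s ^ n * eval u φ) {0}ᶜ := by
    intro s (hs : s ≠ 0)
    dsimp only
    rw [← h s⁻¹, ← hφ.eval_smul_s10, smul_add, smul_smul, mul_inv_cancel₀ hs, one_smul]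
  have hcont : Continuous fun s : K => s • u + v := by fun_prop
  simpa [hn] using congr_fun ((continuous_eval φ).comp hcont |>.ext_on
    (dense_compl_singleton 0) (by fun_prop) hscale) 0

theorem exists_eval_smul_add_smul_eq_zero_s10 [IsAlgClosed K] (hφ : φ.IsHomogeneous n) (hn : n ≠ 0)
    (u v : σ → K) : ∃ a b : K, (a, b) ≠ 0 ∧ eval (a • u + b • v) φ = 0 := by
  set g : Polynomial K :=
    MvPolynomial.aeval (fun i => Polynomial.C (u i) + Polynomial.X * Polynomial.C (v i)) φ
  have hg : ∀ t, g.eval t = eval (u + t • v) φ := by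
    intro t
    rw [← Polynomial.coe_aeval_eq_eval, ← AlgHom.comp_apply, MvPolynomial.comp_aeval]
    simp only [Polynomial.coe_aeval_eq_eval, Polynomial.eval_add, Polynomial.eval_mul,
      Polynomial.eval_C, Polynomial.eval_X, MvPolynomial.aeval_eq_eval]
    rfl
  rcases ne_or_eq g.degree 0 with hdeg | hdeg
  · obtain ⟨t, ht⟩ := IsAlgClosed.exists_root g hdeg
    exact ⟨1, t, by simp, by rw [one_smul, ← hg]; exact ht⟩
  · refine ⟨0, 1, by simp, ?_⟩
    rw [zero_smul, one_smul, zero_add]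
    refine hφ.eval_eq_zero_of_forall_eval_add_smul_eq hn (u := u) fun t => ?_
    have hu : eval u φ = g.eval 0 := by rw [hg, zero_smul, add_zero]
    rw [← hg, hu, Polynomial.eq_C_of_degree_eq_zero hdeg]
    simp

theorem exists_star_mul_add_star_mul_eq_one_eval_eq_zero {φ : MvPolynomial σ ℂ}
    (hφ : φ.IsHomogeneous n) (hn : n ≠ 0) (u v : σ → ℂ) :
    ∃ a b : ℂ, star a * a + star b * b = 1 ∧ eval (a • u + b • v) φ = 0 := by
  obtain ⟨a, b, hab, hroot⟩ := hφ.exists_eval_smul_add_smul_eq_zero_s10 hn u v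
  have hN : 0 < Complex.normSq a + Complex.normSq b := by
    rcases not_and_or.mp (mt Prod.mk_eq_zero.mpr hab) with ha | hb
    · exact add_pos_of_pos_of_nonneg (Complex.normSq_pos.mpr ha) (Complex.normSq_nonneg b)
    · exact add_pos_of_nonneg_of_pos (Complex.normSq_nonneg a) (Complex.normSq_pos.mpr hb)
  set c : ℝ := (√(Complex.normSq a + Complex.normSq b))⁻¹
  refine ⟨c * a, c * b, ?_, ?_⟩
  · simp only [star_mul', Complex.star_def, Complex.conj_ofReal]
    rw [show (c : ℂ) * conj a * (c * a) + c * conj b * (c * b)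
        = ((c ^ 2 * (Complex.normSq a + Complex.normSq b) : ℝ) : ℂ) by
          push_cast [Complex.normSq_eq_conj_mul_self]; ring,
      inv_pow, Real.sq_sqrt hN.le, inv_mul_cancel₀ hN.ne', Complex.ofReal_one]
  · rw [mul_smul, mul_smul, ← smul_add, hφ.eval_smul_s10, hroot, mul_zero]

end MvPolynomial.IsHomogeneous

namespace Matrix

theorem vecMulVec_self_star_add_rotate {ι R : Type*} [CommRing R] [StarRing R] {a b : R}
    (hab : star a * a + star b * b = 1) (x y : ι → R) :
    vecMulVec (a • x + b • y) (star (a • x + b • y)) +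
        vecMulVec (-star b • x + star a • y) (star (-star b • x + star a • y)) =
      vecMulVec x (star x) + vecMulVec y (star y) := by
  ext i j
  simp only [add_apply, vecMulVec_apply, Pi.add_apply, Pi.smul_apply, Pi.star_apply,
    smul_eq_mul, star_add, star_mul', star_neg, star_star]
  linear_combination (x i * star (x j) + y i * star (y j)) * hab

theorem exists_pos_smul_vecMulVec_unit {κ : Type*} [Fintype κ] {x : κ → ℂ} (hx : x ≠ 0) :
    ∃ (p : ℝ) (c : ℂ), 0 < p ∧ star (c • x) ⬝ᵥ (c • x) = 1 ∧
      vecMulVec x (star x) = (p : ℂ) • vecMulVec (c • x) (star (c • x)) := by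
  have hpos : 0 < star x ⬝ᵥ x := dotProduct_star_self_pos_iff.mpr hx
  set q := (star x ⬝ᵥ x).re
  have hq : 0 < q := (Complex.pos_iff.mp hpos).1
  have hqx : star x ⬝ᵥ x = q := Complex.eq_re_of_ofReal_le (by exact_mod_cast hpos.le)
  set c : ℂ := (((√q)⁻¹ : ℝ) : ℂ)
  have hc : star c = c := Complex.conj_ofReal _
  have hc2 : c * c * q = 1 := by
    rw [← Complex.ofReal_mul, ← Complex.ofReal_mul, ← mul_inv, Real.mul_self_sqrt hq.le,
      inv_mul_cancel₀ hq.ne', Complex.ofReal_one]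
  refine ⟨q, c, hq, ?_, ?_⟩
  · rw [star_smul, hc, smul_dotProduct, dotProduct_smul, hqx, smul_eq_mul, smul_eq_mul,
      ← mul_assoc, hc2]
  · rw [star_smul, hc, smul_vecMulVec, vecMulVec_smul, smul_smul, smul_smul,
      show (q : ℂ) * c * c = 1 by rw [← hc2]; ring, one_smul]

theorem exists_ensemble_of_sum_vecMulVec {ι κ : Type*} [Fintype ι] [Fintype κ] (x : ι → κ → ℂ) :
    ∃ (m : ℕ) (p : Fin m → ℝ) (ψ : Fin m → κ → ℂ) (e : Fin m → ι), Function.Injective e ∧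
      (∀ k, 0 < p k) ∧ (∀ k, star (ψ k) ⬝ᵥ ψ k = 1) ∧ (∀ k, ∃ c : ℂ, ψ k = c • x (e k)) ∧
      ∑ i, vecMulVec (x i) (star (x i)) = ∑ k, (p k : ℂ) • vecMulVec (ψ k) (star (ψ k)) := by
  classical
  choose p c hp hunit hvmv using fun i : {i // x i ≠ 0} => exists_pos_smul_vecMulVec_unit i.2
  set eqv := Fintype.equivFin {i // x i ≠ 0}
  refine ⟨_, p ∘ eqv.symm, fun k => c (eqv.symm k) • x (eqv.symm k), fun k => eqv.symm k,
    Subtype.val_injective.comp eqv.symm.injective, fun k => hp _, fun k => hunit _,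
    fun k => ⟨_, rfl⟩, ?_⟩
  have hzero : ∑ i : {i // ¬ x i ≠ 0}, vecMulVec (x i) (star (x i)) = 0 :=
    Finset.sum_eq_zero fun i _ => by simp [not_not.mp i.2]
  rw [← Fintype.sum_subtype_add_sum_subtype (fun i => x i ≠ 0), hzero, add_zero,
    ← eqv.symm.sum_comp]
  exact Finset.sum_congr rfl fun k _ => hvmv _

theorem trace_sum_smul_vecMulVec_star {ι κ : Type*} [Fintype ι] [Fintype κ] (p : ι → ℂ)
    {ψ : ι → κ → ℂ} (hψ : ∀ i, star (ψ i) ⬝ᵥ ψ i = 1) :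
    trace (∑ i, p i • vecMulVec (ψ i) (star (ψ i))) = ∑ i, p i := by
  simp only [trace_sum, trace_smul, trace_vecMulVec, smul_eq_mul]
  exact Finset.sum_congr rfl fun i _ => by rw [dotProduct_comm, hψ, mul_one]

end Matrix

theorem MvPolynomial.IsHomogeneous.exists_eval_eq_zero_vecMulVec_add_eq {σ : Type*}
    {φ : MvPolynomial σ ℂ} {n : ℕ} (hφ : φ.IsHomogeneous n) (hn : n ≠ 0) (x y : σ → ℂ) :
    ∃ z w, eval z φ = 0 ∧
      vecMulVec z (star z) + vecMulVec w (star w) = vecMulVec x (star x) + vecMulVec y (star y) :=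
  have ⟨_, _, hab, hroot⟩ := hφ.exists_star_mul_add_star_mul_eq_one_eval_eq_zero hn x y
  ⟨_, _, hroot, vecMulVec_self_star_add_rotate hab x y⟩

theorem exists_add_sum_eq_add_sum_of_exchange {V M : Type*} [AddCommMonoid M] (f : V → M)
    (S : V → Prop) (hS : ∀ x y, ∃ z w, S z ∧ f z + f w = f x + f y) :
    ∀ {m : ℕ} (r₀ : V) (x : Fin m → V),
      ∃ (r : V) (z : Fin m → V), (∀ i, S (z i)) ∧ f r₀ + ∑ i, f (x i) = f r + ∑ i, f (z i)
  | 0, r₀, _ => ⟨r₀, Fin.elim0, fun i => i.elim0, rfl⟩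
  | _ + 1, r₀, x => by
    obtain ⟨z₀, w, hz₀, hw⟩ := hS r₀ (x 0)
    obtain ⟨r, z, hz, hsum⟩ := exists_add_sum_eq_add_sum_of_exchange f S hS w (Fin.tail x)
    refine ⟨r, Fin.cons z₀ z, Fin.cases hz₀ hz, ?_⟩
    simp only [Fin.sum_univ_succ, Fin.cons_zero, Fin.cons_succ, ← add_assoc, ← hw]
    simp only [Fin.tail] at hsum
    rw [add_assoc, hsum]
    abel

theorem Function.Injective.exists_forall_ne_apply_ne {α β : Type*} [Nonempty α] {e : α → β}
    (he : e.Injective) (b : β) : ∃ j, ∀ k, k ≠ j → e k ≠ b := by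
  by_cases h : ∃ j, e j = b
  · obtain ⟨j, hj⟩ := h
    exact ⟨j, fun k hk hkb => hk (he (hkb.trans hj.symm))⟩
  · exact ⟨Classical.arbitrary α, fun k _ hkb => h ⟨k, hkb⟩⟩

theorem stmt_10 {n : ℕ} (P : MvPolynomial (Fin n) ℂ) (D : ℕ) (hD : 1 ≤ D)
    (hP : P.IsHomogeneous D) (ρ : Matrix (Fin n) (Fin n) ℂ)
    (hρ : IsDensityMatrix ρ) :
    ∃ (m : ℕ) (p : Fin m → ℝ) (ψ : Fin m → Fin n → ℂ),
      (∀ i, 0 < p i) ∧ (∑ i, p i) = 1 ∧ (∀ i, star (ψ i) ⬝ᵥ ψ i = 1) ∧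
      ρ = ∑ i, ((p i : ℝ) : ℂ) • Matrix.vecMulVec (ψ i) (star (ψ i)) ∧
      ∃ j : Fin m, ∀ i, i ≠ j → MvPolynomial.eval (ψ i) P = 0 := by
  obtain ⟨N, x, hρx⟩ := posSemidef_iff_eq_sum_vecMulVec.mp hρ.1
  obtain ⟨r, z, hz, hsum⟩ := exists_add_sum_eq_add_sum_of_exchange
    (fun v => vecMulVec v (star v)) (fun v => MvPolynomial.eval v P = 0)
    (hP.exists_eval_eq_zero_vecMulVec_add_eq (by omega)) 0 x
  obtain ⟨m, p, ψ, e, he, hp, hψ, hscale, hρψ⟩ :=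
    exists_ensemble_of_sum_vecMulVec (Fin.cons r z : Fin (N + 1) → Fin n → ℂ)
  have hρ' : ρ = ∑ k, (p k : ℂ) • vecMulVec (ψ k) (star (ψ k)) := by
    rw [hρx, ← hρψ, Fin.sum_univ_succ]
    simpa using hsum
  have hp1 : ∑ k, p k = 1 := by
    have htr := hρ.2
    rw [hρ', trace_sum_smul_vecMulVec_star _ hψ] at htr
    exact_mod_cast htr
  have : Nonempty (Fin m) := by
    by_contra hm
    simp [not_nonempty_iff.mp hm] at hp1
  obtain ⟨j, hj⟩ := he.exists_forall_ne_apply_ne 0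
  refine ⟨m, p, ψ, hp, hp1, hψ, hρ', j, fun k hk => ?_⟩
  obtain ⟨c, hc⟩ := hscale k
  obtain ⟨i, hi⟩ := Fin.exists_succ_eq.mpr (hj k hk)
  rw [hc, hP.eval_smul_s10, ← hi, Fin.cons_succ, hz i, mul_zero]
end

section
/- Let P be a homogeneous multivariate polynomial of degree D ≥ 1 in n complex variables, and let ρ be a density matrix on ℂ^n. Suppose ρ = μ·ρ_L + (1−μ)·ω is an optimal zero-E decomposition: ρ_L ∈ Z, ω is a density matrix, 0 ≤ μ < 1, and for every decomposition ρ = λ·ρ_L' + (1−λ)·ω' with ρ_L' ∈ Z and ω' a density matrix one has λ ≤ μ. Then every unit vector v in the range (column space) of ω satisfies P(v) ≠ 0. -/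
open Matrix
open scoped ComplexOrder

/-- The set of density matrices expressible as a finite convex combination of rank-one
projections onto unit vectors annihilating `P`. -/
def ZeroSet {n : ℕ} (P : MvPolynomial (Fin n) ℂ) : Set (Matrix (Fin n) (Fin n) ℂ) :=
  { σ | ∃ (m : ℕ) (q : Fin m → ℝ) (v : Fin m → Fin n → ℂ),
      (∀ j, 0 ≤ q j) ∧ (∑ j, q j) = 1 ∧ (∀ j, star (v j) ⬝ᵥ v j = 1) ∧
      (∀ j, MvPolynomial.eval (v j) P = 0) ∧
      σ = ∑ j, ((q j : ℝ) : ℂ) • Matrix.vecMulVec (v j) (star (v j)) }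

/-! If a unit vector `v` with `P v = 0` lay in the range of `ω`, then `ω ≥ ε |v⟩⟨v|` for some
`ε > 0` (Cauchy–Schwarz for the form `⟨x, ω y⟩`, as `v = ω w`). Shifting the weight `(1 - μ) ε`
of `|v⟩⟨v|` from `ω` onto the zero part, which stays in the convex set `Z`, gives a decomposition
of `ρ` with weight `μ + (1 - μ) ε > μ` on `Z`, contradicting maximality of `μ`. -/

variable {m : Type*}

theorem Matrix.PosSemidef.sub_smul_of_le {A B : Matrix m m ℂ} {ε t : ℝ}
    (h : (A - ε • B).PosSemidef) (hB : B.PosSemidef) (hte : t ≤ ε) : (A - t • B).PosSemidef := by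
  have := h.add (hB.smul (sub_nonneg.mpr hte))
  rwa [sub_smul, ← add_sub_assoc, sub_add_cancel] at this

theorem Matrix.PosSemidef.normSq_dotProduct_mulVec_le [Fintype m] {A : Matrix m m ℂ}
    (hA : A.PosSemidef) (x y : m → ℂ) :
    Complex.normSq (star x ⬝ᵥ (A *ᵥ y)) ≤ (star x ⬝ᵥ (A *ᵥ x)).re * (star y ⬝ᵥ (A *ᵥ y)).re := by
  let := A.toSeminormedAddCommGroup hA
  let := A.toInnerProductSpace hA
  have hinner (x y : m → ℂ) : inner ℂ x y = star x ⬝ᵥ (A *ᵥ y) := dotProduct_comm _ _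
  have := inner_mul_inner_self_le (𝕜 := ℂ) x y
  rwa [norm_inner_symm y x, ← sq, ← Complex.normSq_eq_norm_sq, hinner, hinner, hinner] at this

theorem Matrix.dotProduct_vecMulVec_mulVec [Fintype m] (v x : m → ℂ) :
    star x ⬝ᵥ (vecMulVec v (star v) *ᵥ x) = Complex.normSq (star v ⬝ᵥ x) := by
  rw [vecMulVec_mulVec, Complex.normSq_eq_conj_mul_self]
  simp [dotProduct_smul, star_dotProduct x v, mul_comm]

theorem Matrix.PosSemidef.exists_posSemidef_sub_smul_vecMulVec [Fintype m] {A : Matrix m m ℂ}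
    (hA : A.PosSemidef) {v : m → ℂ} (hv : v ∈ LinearMap.range A.mulVecLin) :
    ∃ ε : ℝ, 0 < ε ∧ (A - ε • vecMulVec v (star v)).PosSemidef := by
  obtain ⟨w, rfl⟩ := hv
  set c := (star w ⬝ᵥ (A *ᵥ w)).re
  have hc : 0 ≤ c := (Complex.nonneg_iff.mp (hA.dotProduct_mulVec_nonneg w)).1
  refine ⟨(c + 1)⁻¹, by positivity, ?_⟩
  rw [posSemidef_iff_dotProduct_mulVec]
  refine ⟨hA.isHermitian.sub
    ((posSemidef_vecMulVec_self_star _).isHermitian.smul (IsSelfAdjoint.all _)), fun x => ?_⟩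
  have hx := hA.dotProduct_mulVec_nonneg x
  have hcs := hA.normSq_dotProduct_mulVec_le w x
  rw [sub_mulVec, dotProduct_sub, smul_mulVec, dotProduct_smul, dotProduct_vecMulVec_mulVec,
    mulVecLin_apply, star_mulVec, ← dotProduct_mulVec, hA.isHermitian.eq,
    Complex.eq_re_of_ofReal_le hx]
  have hq : 0 ≤ (star x ⬝ᵥ (A *ᵥ x)).re := (Complex.nonneg_iff.mp hx).1
  rw [Complex.real_smul, ← Complex.ofReal_mul, ← Complex.ofReal_sub, Complex.zero_le_real,
    sub_nonneg, inv_mul_le_iff₀ (by positivity)]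
  nlinarith

theorem vecMulVec_mem_zeroSet {n : ℕ} {P : MvPolynomial (Fin n) ℂ} {v : Fin n → ℂ}
    (hv : star v ⬝ᵥ v = 1) (hPv : MvPolynomial.eval v P = 0) :
    vecMulVec v (star v) ∈ ZeroSet P :=
  ⟨1, fun _ => 1, fun _ => v, fun _ => zero_le_one, by simp, fun _ => hv, fun _ => hPv, by simp⟩

theorem convex_zeroSet {n : ℕ} (P : MvPolynomial (Fin n) ℂ) : Convex ℝ (ZeroSet P) := by
  rintro _ ⟨k, p, u, hp, hp1, hu, hPu, rfl⟩ _ ⟨l, q, w, hq, hq1, hw, hPw, rfl⟩ a b ha hb hab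
  refine ⟨k + l, Fin.append (a * p ·) (b * q ·), Fin.append u w, fun j => ?_, ?_,
    fun j => ?_, fun j => ?_, ?_⟩
  · refine Fin.addCases (fun i => ?_) (fun i => ?_) j
    · simpa using mul_nonneg ha (hp i)
    · simpa using mul_nonneg hb (hq i)
  · simp [Fin.sum_univ_add, ← Finset.mul_sum, hp1, hq1, hab]
  · exact Fin.addCases (by simpa using hu) (by simpa using hw) j
  · exact Fin.addCases (by simpa using hPu) (by simpa using hPw) j
  · simp [Fin.sum_univ_add, Finset.smul_sum, smul_smul]

theorem IsDensityMatrix.normalize_sub_smul_vecMulVec {n : ℕ} {ω : Matrix (Fin n) (Fin n) ℂ}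
    (hω : IsDensityMatrix ω) {v : Fin n → ℂ} (hv : star v ⬝ᵥ v = 1) {ε : ℝ} (hε : ε < 1)
    (h : (ω - ε • vecMulVec v (star v)).PosSemidef) :
    IsDensityMatrix ((1 - ε)⁻¹ • (ω - ε • vecMulVec v (star v))) := by
  refine ⟨h.smul (inv_nonneg.mpr (sub_nonneg.mpr hε.le)), ?_⟩
  rw [trace_smul, trace_sub, trace_smul, hω.2, trace_vecMulVec, dotProduct_comm, hv,
    show (1 : ℂ) - ε • 1 = (1 - ε) • 1 by rw [sub_smul, one_smul], smul_smul,
    inv_mul_cancel₀ (sub_ne_zero.mpr hε.ne'), one_smul]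

/-- Moves the weight `(1 - μ) ε` that `b` puts on `m` over to the first summand. -/
theorem smul_add_smul_regroup {E : Type*} [AddCommGroup E] [Module ℝ E] (a b m : E)
    {μ ε lam : ℝ} (hlam : lam = μ + (1 - μ) * ε) (hlam0 : lam ≠ 0) (hε : ε ≠ 1) :
    μ • a + (1 - μ) • b =
      lam • ((μ / lam) • a + ((1 - μ) * ε / lam) • m) + (1 - lam) • ((1 - ε)⁻¹ • (b - ε • m)) := by
  have : 1 - ε ≠ 0 := sub_ne_zero.mpr hε.symm
  subst hlam
  match_scalars <;> field_simp <;> ring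

theorem stmt_12_general {n : ℕ} (P : MvPolynomial (Fin n) ℂ) (ρ : Matrix (Fin n) (Fin n) ℂ)
    (μ : ℝ) (ρL ω : Matrix (Fin n) (Fin n) ℂ)
    (hρL : ρL ∈ ZeroSet P) (hω : IsDensityMatrix ω)
    (hμ0 : 0 ≤ μ) (hμ1 : μ < 1)
    (hdecomp : ρ = ((μ : ℝ) : ℂ) • ρL + ((1 - μ : ℝ) : ℂ) • ω)
    (hmax : ∀ (lam : ℝ) (ρL' ω' : Matrix (Fin n) (Fin n) ℂ),
      ρL' ∈ ZeroSet P → IsDensityMatrix ω' → 0 ≤ lam → lam ≤ 1 →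
      ρ = ((lam : ℝ) : ℂ) • ρL' + ((1 - lam : ℝ) : ℂ) • ω' → lam ≤ μ) :
    ∀ v : Fin n → ℂ, star v ⬝ᵥ v = 1 → v ∈ LinearMap.range ω.mulVecLin →
      MvPolynomial.eval v P ≠ 0 := by
  intro v hv hvω hPv
  simp only [Complex.coe_smul] at hdecomp hmax
  obtain ⟨ε, hε, hε1, hωε⟩ :
      ∃ ε : ℝ, 0 < ε ∧ ε < 1 ∧ (ω - ε • vecMulVec v (star v)).PosSemidef := by
    obtain ⟨ε, hε, hωε⟩ := hω.1.exists_posSemidef_sub_smul_vecMulVec hvω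
    exact ⟨min ε (1 / 2), lt_min hε one_half_pos, (min_le_right _ _).trans_lt one_half_lt_one,
      hωε.sub_smul_of_le (posSemidef_vecMulVec_self_star v) (min_le_left _ _)⟩
  set lam := μ + (1 - μ) * ε
  have hlam : 0 < lam := by nlinarith
  have hzero : (μ / lam) • ρL + ((1 - μ) * ε / lam) • vecMulVec v (star v) ∈ ZeroSet P :=
    convex_zeroSet P hρL (vecMulVec_mem_zeroSet hv hPv) (by positivity)
      (div_nonneg (by nlinarith) hlam.le) (by rw [← add_div, div_self hlam.ne'])
  have := hmax lam _ _ hzero (hω.normalize_sub_smul_vecMulVec hv hε1 hωε) hlam.le (by nlinarith)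
    (hdecomp.trans (smul_add_smul_regroup ρL ω _ rfl hlam.ne' hε1.ne))
  nlinarith

theorem stmt_12 {n : ℕ} (P : MvPolynomial (Fin n) ℂ) (D : ℕ) (hD : 1 ≤ D)
    (hP : P.IsHomogeneous D) (ρ : Matrix (Fin n) (Fin n) ℂ)
    (hρ : IsDensityMatrix ρ) (μ : ℝ) (ρL ω : Matrix (Fin n) (Fin n) ℂ)
    (hρL : ρL ∈ ZeroSet P) (hω : IsDensityMatrix ω)
    (hμ0 : 0 ≤ μ) (hμ1 : μ < 1)
    (hdecomp : ρ = ((μ : ℝ) : ℂ) • ρL + ((1 - μ : ℝ) : ℂ) • ω)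
    (hmax : ∀ (lam : ℝ) (ρL' ω' : Matrix (Fin n) (Fin n) ℂ),
      ρL' ∈ ZeroSet P → IsDensityMatrix ω' → 0 ≤ lam → lam ≤ 1 →
      ρ = ((lam : ℝ) : ℂ) • ρL' + ((1 - lam : ℝ) : ℂ) • ω' → lam ≤ μ) :
    ∀ v : Fin n → ℂ, star v ⬝ᵥ v = 1 → v ∈ LinearMap.range ω.mulVecLin →
      MvPolynomial.eval v P ≠ 0 :=
  stmt_12_general P ρ μ ρL ω hρL hω hμ0 hμ1 hdecomp hmax
end

section
/- Let P be a homogeneous multivariate polynomial of degree D ≥ 1 in n complex variables, and let ρ be a density matrix on ℂ^n. Suppose ρ = μ·ρ_L + (1−μ)·ω is an optimal zero-E decomposition: ρ_L ∈ Z, ω is a density matrix, 0 ≤ μ < 1, and for every decomposition ρ = λ·ρ_L' + (1−λ)·ω' with ρ_L' ∈ Z and ω' a density matrix one has λ ≤ μ. Then ω is a pure state, i.e., rank ω = 1. -/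
open Matrix
open scoped ComplexOrder

/-!
If `ω` is not pure then, having trace one, it has two orthonormal eigenvectors `u`, `w` with
positive eigenvalues. Restricted to the plane spanned by `u` and `w`, the form `P` becomes a
binary form of degree `D ≥ 1`, which has a nontrivial zero over `ℂ`; by homogeneity it has a
zero `v` of norm one. With `ε` the smaller of the two eigenvalues, `ω ≥ ε (u u† + w w†) ≥ ε v v†`,
so `ω = ε v v† + (1 - ε) ω'` for a density matrix `ω'`. Moving the term `ε v v†` into the `Z`
part gives a decomposition of `ρ` with weight `μ + (1 - μ) ε > μ`, contradicting maximality.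
-/

namespace MvPolynomial

theorem IsHomogeneous.eval_smul_s13 {σ R : Type*} [CommSemiring R] {φ : MvPolynomial σ R} {n : ℕ}
    (hφ : φ.IsHomogeneous n) (c : R) (x : σ → R) :
    eval (c • x) φ = c ^ n * eval x φ := by
  rw [eval_eq, eval_eq, Finset.mul_sum]
  refine Finset.sum_congr rfl fun d hd => ?_
  have hdeg : ∑ i ∈ d.support, d i = n := by
    simpa [Finsupp.weight_apply, Finsupp.sum] using hφ (mem_support_iff.mp hd)
  simp only [Pi.smul_apply, smul_eq_mul, mul_pow, Finset.prod_mul_distrib,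
    Finset.prod_pow_eq_pow_sum, hdeg]
  ring

variable {σ K : Type*} [Field K] [IsAlgClosed K] {n : ℕ}

theorem IsHomogeneous.exists_ne_zero_eval_eq_zero_of_fin_two {Q : MvPolynomial (Fin 2) K}
    (hQ : Q.IsHomogeneous n) (hn : n ≠ 0) : ∃ x : Fin 2 → K, x ≠ 0 ∧ eval x Q = 0 := by
  -- `Q` is the homogenization of `p = Q(X, 1)`: a root `t` of `p` gives the zero `(t, 1)`, and
  -- if `p` is a constant `c` then `Q = c • Y ^ n` vanishes at `(1, 0)`.
  set p : Polynomial K := MvPolynomial.aeval ![Polynomial.X, 1] Q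
  by_cases hp : p.degree = 0
  · refine ⟨![1, 0], by simp, ?_⟩
    have hpQ : p.homogenize n = Q := Polynomial.homogenize_eq_of_isHomogeneous hQ rfl
    rw [← hpQ, Polynomial.eq_C_of_degree_eq_zero hp, Polynomial.homogenize_C]
    simp [hn]
  · obtain ⟨t, ht⟩ := IsAlgClosed.exists_root p hp
    refine ⟨![t, 1], by simp, ?_⟩
    rw [← ht, ← Polynomial.coe_aeval_eq_eval, comp_aeval_apply]
    change MvPolynomial.aeval _ Q = _
    congr 2
    funext i
    fin_cases i <;> simp

theorem IsHomogeneous.exists_eval_smul_add_smul_eq_zero_s13 {φ : MvPolynomial σ K}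
    (hφ : φ.IsHomogeneous n) (hn : n ≠ 0) (u w : σ → K) :
    ∃ a b : K, (a ≠ 0 ∨ b ≠ 0) ∧ eval (a • u + b • w) φ = 0 := by
  have hQ := hφ.aeval (fun k => (C (u k) * X 0 + C (w k) * X 1 : MvPolynomial (Fin 2) K)) fun k =>
    (isHomogeneous_C_mul_X (u k) 0).add (isHomogeneous_C_mul_X (w k) 1)
  rw [one_mul] at hQ
  obtain ⟨x, hx, hQx⟩ := hQ.exists_ne_zero_eval_eq_zero_of_fin_two hn
  refine ⟨x 0, x 1, ?_, ?_⟩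
  · contrapose! hx
    funext i
    fin_cases i <;> simp [hx]
  · change MvPolynomial.aeval x _ = 0 at hQx
    rw [← hQx, comp_aeval_apply]
    change MvPolynomial.aeval _ φ = MvPolynomial.aeval _ φ
    congr 2
    funext k
    simp [mul_comm]

theorem IsHomogeneous.exists_norm_sq_add_norm_sq_eq_one_eval_eq_zero {φ : MvPolynomial σ ℂ}
    (hφ : φ.IsHomogeneous n) (hn : n ≠ 0) (u w : σ → ℂ) :
    ∃ α β : ℂ, ‖α‖ ^ 2 + ‖β‖ ^ 2 = 1 ∧ eval (α • u + β • w) φ = 0 := by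
  obtain ⟨a, b, hab, hzero⟩ := hφ.exists_eval_smul_add_smul_eq_zero_s13 hn u w
  have hpos : 0 < ‖a‖ ^ 2 + ‖b‖ ^ 2 := by
    rcases hab with h | h <;> positivity
  set N := Real.sqrt (‖a‖ ^ 2 + ‖b‖ ^ 2)
  have hN : 0 < N := Real.sqrt_pos.mpr hpos
  refine ⟨(N : ℂ)⁻¹ * a, (N : ℂ)⁻¹ * b, ?_, ?_⟩
  · simp only [norm_mul, norm_inv, Complex.norm_real, Real.norm_eq_abs, abs_of_pos hN, mul_pow,
      ← mul_add, inv_pow, N, Real.sq_sqrt hpos.le]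
    exact inv_mul_cancel₀ hpos.ne'
  · rw [mul_smul, mul_smul, ← smul_add, hφ.eval_smul_s13, hzero, mul_zero]

end MvPolynomial

section RCLike

variable {𝕜 n : Type*} [RCLike 𝕜] [Fintype n]

theorem RCLike.norm_mul_add_mul_sq_le (a b p q : 𝕜) :
    ‖a * p + b * q‖ ^ 2 ≤ (‖a‖ ^ 2 + ‖b‖ ^ 2) * (‖p‖ ^ 2 + ‖q‖ ^ 2) := by
  have h := norm_add_le (a * p) (b * q)
  rw [norm_mul, norm_mul] at h
  nlinarith [norm_nonneg (a * p + b * q), sq_nonneg (‖a‖ * ‖q‖ - ‖b‖ * ‖p‖),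
    mul_nonneg (norm_nonneg a) (norm_nonneg p), mul_nonneg (norm_nonneg b) (norm_nonneg q)]

theorem OrthonormalBasis.star_dotProduct_smul_add_smul
    (b : OrthonormalBasis n 𝕜 (EuclideanSpace 𝕜 n)) {i j : n} (hij : i ≠ j) (α β : 𝕜) :
    star (α • ⇑(b i) + β • ⇑(b j)) ⬝ᵥ (α • ⇑(b i) + β • ⇑(b j)) =
      ((‖α‖ ^ 2 + ‖β‖ ^ 2 : ℝ) : 𝕜) := by
  have horth : inner 𝕜 (α • b i) (β • b j) = 0 := by
    simp [inner_smul_left, inner_smul_right, b.orthonormal.2 hij]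
  have hpyth := norm_add_sq_eq_norm_sq_add_norm_sq_of_inner_eq_zero _ _ horth
  rw [norm_smul, norm_smul, b.orthonormal.1 i, b.orthonormal.1 j] at hpyth
  have hdot : star (α • ⇑(b i) + β • ⇑(b j)) ⬝ᵥ (α • ⇑(b i) + β • ⇑(b j)) =
      inner 𝕜 (α • b i + β • b j) (α • b i + β • b j) := by
    rw [EuclideanSpace.inner_eq_star_dotProduct, dotProduct_comm]
    rfl
  rw [hdot, inner_self_eq_norm_sq_to_K]
  norm_cast
  rw [sq, hpyth]
  ring

theorem Matrix.star_dotProduct_vecMulVec_mulVec (v x : n → 𝕜) :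
    star x ⬝ᵥ (vecMulVec v (star v) *ᵥ x) = ((‖star v ⬝ᵥ x‖ ^ 2 : ℝ) : 𝕜) := by
  rw [vecMulVec_mulVec, op_smul_eq_smul, dotProduct_smul, smul_eq_mul, star_dotProduct,
    RCLike.star_def, RCLike.conj_mul, RCLike.norm_conj]
  norm_cast

variable [DecidableEq n]

theorem Matrix.IsHermitian.star_dotProduct_mulVec_eq_sum {A : Matrix n n 𝕜} (hA : A.IsHermitian)
    (x : n → 𝕜) :
    star x ⬝ᵥ (A *ᵥ x) =
      ((∑ k, hA.eigenvalues k * ‖star ⇑(hA.eigenvectorBasis k) ⬝ᵥ x‖ ^ 2 : ℝ) : 𝕜) := by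
  set U : Matrix n n 𝕜 := (hA.eigenvectorUnitary : Matrix n n 𝕜)
  have hUx : star U *ᵥ x = fun k => star ⇑(hA.eigenvectorBasis k) ⬝ᵥ x := by
    funext k
    simp [U, mulVec, dotProduct, star_apply]
  have hxU : star x ᵥ* U = star (star U *ᵥ x) := by simp [star_mulVec, star_eq_conjTranspose]
  conv_lhs => rw [hA.spectral_theorem, Unitary.conjStarAlgAut_apply]
  rw [← mulVec_mulVec, ← mulVec_mulVec, dotProduct_mulVec, hxU, hUx, dotProduct,
    RCLike.ofReal_sum]
  refine Finset.sum_congr rfl fun k _ => ?_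
  simp only [mulVec_diagonal, Pi.star_apply, Function.comp_apply, RCLike.star_def]
  push_cast
  rw [← RCLike.conj_mul]
  ring

theorem Matrix.PosSemidef.sub_smul_vecMulVec {A : Matrix n n 𝕜} (hA : A.PosSemidef) {i j : n}
    (hij : i ≠ j) {ε : ℝ} (hε : 0 ≤ ε) (hεi : ε ≤ hA.1.eigenvalues i)
    (hεj : ε ≤ hA.1.eigenvalues j) {α β : 𝕜} (hαβ : ‖α‖ ^ 2 + ‖β‖ ^ 2 = 1) {v : n → 𝕜}
    (hv : v = α • ⇑(hA.1.eigenvectorBasis i) + β • ⇑(hA.1.eigenvectorBasis j)) :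
    (A - (ε : 𝕜) • vecMulVec v (star v)).PosSemidef := by
  rw [posSemidef_iff_dotProduct_mulVec]
  refine ⟨hA.1.sub ((posSemidef_vecMulVec_self_star v).smul (RCLike.ofReal_nonneg.mpr hε)).1,
    fun x => ?_⟩
  set c : n → 𝕜 := fun k => star ⇑(hA.1.eigenvectorBasis k) ⬝ᵥ x
  have hvx : star v ⬝ᵥ x = star α * c i + star β * c j := by
    simp [hv, c, add_dotProduct, smul_dotProduct]
  rw [sub_mulVec, dotProduct_sub, smul_mulVec, dotProduct_smul, smul_eq_mul,
    hA.1.star_dotProduct_mulVec_eq_sum, star_dotProduct_vecMulVec_mulVec, hvx]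
  norm_cast
  rw [sub_nonneg]
  have hcs := RCLike.norm_mul_add_mul_sq_le (star α) (star β) (c i) (c j)
  rw [norm_star, norm_star, hαβ, one_mul] at hcs
  calc ε * ‖star α * c i + star β * c j‖ ^ 2 ≤ ε * ‖c i‖ ^ 2 + ε * ‖c j‖ ^ 2 := by
        rw [← mul_add]; exact mul_le_mul_of_nonneg_left hcs hε
    _ ≤ ∑ k ∈ {i, j}, hA.1.eigenvalues k * ‖c k‖ ^ 2 := by
        rw [Finset.sum_pair hij]
        gcongr
    _ ≤ ∑ k, hA.1.eigenvalues k * ‖c k‖ ^ 2 :=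
        Finset.sum_le_sum_of_subset_of_nonneg (Finset.subset_univ _) fun k _ _ =>
          mul_nonneg (hA.eigenvalues_nonneg k) (sq_nonneg _)

end RCLike

section DensityMatrix

variable {n : ℕ}

theorem IsDensityMatrix.sum_eigenvalues {ω : Matrix (Fin n) (Fin n) ℂ} (hω : IsDensityMatrix ω) :
    ∑ k, hω.1.1.eigenvalues k = 1 := by
  have h : ((∑ k, hω.1.1.eigenvalues k : ℝ) : ℂ) = 1 := by
    rw [Complex.ofReal_sum]
    exact hω.1.1.trace_eq_sum_eigenvalues.symm.trans hω.2
  exact_mod_cast h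

theorem IsDensityMatrix.exists_pos_eigenvalues_of_rank_ne_one {ω : Matrix (Fin n) (Fin n) ℂ}
    (hω : IsDensityMatrix ω) (hrank : ω.rank ≠ 1) :
    ∃ i j, i ≠ j ∧ 0 < hω.1.1.eigenvalues i ∧ 0 < hω.1.1.eigenvalues j ∧
      hω.1.1.eigenvalues i + hω.1.1.eigenvalues j ≤ 1 := by
  have hne : Fintype.card {k // hω.1.1.eigenvalues k ≠ 0} ≠ 0 := by
    intro h0
    have hzero : ∀ k, hω.1.1.eigenvalues k = 0 := fun k => by
      by_contra hk
      exact (Fintype.card_eq_zero_iff.mp h0).false ⟨k, hk⟩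
    simpa [hzero] using hω.sum_eigenvalues
  rw [hω.1.1.rank_eq_card_non_zero_eigs] at hrank
  obtain ⟨⟨i, hi⟩, ⟨j, hj⟩, hij⟩ := Fintype.one_lt_card_iff.mp
    (by omega : 1 < Fintype.card {k // hω.1.1.eigenvalues k ≠ 0})
  refine ⟨i, j, fun h => hij (Subtype.ext h), (hω.1.eigenvalues_nonneg i).lt_of_ne' hi,
    (hω.1.eigenvalues_nonneg j).lt_of_ne' hj, ?_⟩
  rw [← Finset.sum_pair fun h => hij (Subtype.ext h), ← hω.sum_eigenvalues]
  exact Finset.sum_le_sum_of_subset_of_nonneg (Finset.subset_univ _) fun k _ _ =>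
    hω.1.eigenvalues_nonneg k

theorem IsDensityMatrix.exists_eq_smul_vecMulVec_add_smul {ω : Matrix (Fin n) (Fin n) ℂ}
    (hω : IsDensityMatrix ω) {v : Fin n → ℂ} (hv : star v ⬝ᵥ v = 1) {ε : ℝ} (hε : ε < 1)
    (hsub : (ω - (ε : ℂ) • vecMulVec v (star v)).PosSemidef) :
    ∃ ω', IsDensityMatrix ω' ∧ ω = (ε : ℂ) • vecMulVec v (star v) + ((1 - ε : ℝ) : ℂ) • ω' := by
  have hε' : (1 - ε : ℂ) ≠ 0 := by exact_mod_cast (sub_pos.mpr hε).ne'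
  refine ⟨(((1 - ε)⁻¹ : ℝ) : ℂ) • (ω - (ε : ℂ) • vecMulVec v (star v)), ⟨?_, ?_⟩, ?_⟩
  · exact hsub.smul (Complex.zero_le_real.mpr (inv_nonneg.mpr (sub_pos.mpr hε).le))
  · rw [trace_smul, trace_sub, trace_smul, trace_vecMulVec, dotProduct_comm, hv, hω.2,
      smul_eq_mul, smul_eq_mul, mul_one]
    push_cast
    exact inv_mul_cancel₀ hε'
  · rw [smul_smul]
    push_cast
    rw [mul_inv_cancel₀ hε', one_smul, add_sub_cancel]

theorem smul_add_smul_vecMulVec_mem_zeroSet {P : MvPolynomial (Fin n) ℂ}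
    {ρL : Matrix (Fin n) (Fin n) ℂ} (hρL : ρL ∈ ZeroSet P) {v : Fin n → ℂ}
    (hv : star v ⬝ᵥ v = 1) (hPv : MvPolynomial.eval v P = 0) {a b : ℝ} (ha : 0 ≤ a)
    (hb : 0 ≤ b) (hab : a + b = 1) :
    (a : ℂ) • ρL + (b : ℂ) • vecMulVec v (star v) ∈ ZeroSet P := by
  obtain ⟨m, q, vs, hq0, hq1, hvs1, hvs0, rfl⟩ := hρL
  refine ⟨m + 1, Fin.cons b fun j => a * q j, Fin.cons v vs, ?_, ?_, ?_, ?_, ?_⟩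
  · exact Fin.cases hb fun j => mul_nonneg ha (hq0 j)
  · rw [Fin.sum_cons, ← Finset.mul_sum, hq1, mul_one, add_comm, hab]
  · exact Fin.cases hv hvs1
  · exact Fin.cases hPv hvs0
  · rw [Fin.sum_univ_succ, Finset.smul_sum, add_comm]
    simp only [Fin.cons_zero, Fin.cons_succ, smul_smul, Complex.ofReal_mul]

theorem exists_zeroSet_weight_gt {P : MvPolynomial (Fin n) ℂ}
    {ρL : Matrix (Fin n) (Fin n) ℂ} (hρL : ρL ∈ ZeroSet P) {v : Fin n → ℂ}
    (hv : star v ⬝ᵥ v = 1) (hPv : MvPolynomial.eval v P = 0) {μ ε : ℝ} (hμ0 : 0 ≤ μ)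
    (hμ1 : μ < 1) (hε0 : 0 < ε) (hε1 : ε ≤ 1) (ω' : Matrix (Fin n) (Fin n) ℂ) :
    ∃ lam ρL', ρL' ∈ ZeroSet P ∧ μ < lam ∧ lam ≤ 1 ∧
      (μ : ℂ) • ρL + ((1 - μ : ℝ) : ℂ) •
          ((ε : ℂ) • vecMulVec v (star v) + ((1 - ε : ℝ) : ℂ) • ω') =
        (lam : ℂ) • ρL' + ((1 - lam : ℝ) : ℂ) • ω' := by
  set lam := μ + (1 - μ) * ε
  have hgain : 0 < (1 - μ) * ε := mul_pos (sub_pos.mpr hμ1) hε0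
  have hlam : 0 < lam := by positivity
  refine ⟨lam, ((μ / lam : ℝ) : ℂ) • ρL + (((1 - μ) * ε / lam : ℝ) : ℂ) • vecMulVec v (star v),
    smul_add_smul_vecMulVec_mem_zeroSet hρL hv hPv (by positivity) (by positivity)
      (by rw [← add_div, div_self hlam.ne']),
    by linarith, by nlinarith, ?_⟩
  have hlamC : (lam : ℂ) ≠ 0 := by exact_mod_cast hlam.ne'
  match_scalars <;> simp only [lam] at hlamC ⊢ <;> push_cast at hlamC ⊢ <;> field_simp
  ring

end DensityMatrix

theorem stmt_13_general {n : ℕ} (P : MvPolynomial (Fin n) ℂ) (D : ℕ) (hD : 1 ≤ D)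
    (hP : P.IsHomogeneous D) (ρ : Matrix (Fin n) (Fin n) ℂ)
    (μ : ℝ) (ρL ω : Matrix (Fin n) (Fin n) ℂ)
    (hρL : ρL ∈ ZeroSet P) (hω : IsDensityMatrix ω)
    (hμ0 : 0 ≤ μ) (hμ1 : μ < 1)
    (hdecomp : ρ = ((μ : ℝ) : ℂ) • ρL + ((1 - μ : ℝ) : ℂ) • ω)
    (hmax : ∀ (lam : ℝ) (ρL' ω' : Matrix (Fin n) (Fin n) ℂ),
      ρL' ∈ ZeroSet P → IsDensityMatrix ω' → 0 ≤ lam → lam ≤ 1 →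
      ρ = ((lam : ℝ) : ℂ) • ρL' + ((1 - lam : ℝ) : ℂ) • ω' → lam ≤ μ) :
    ω.rank = 1 := by
  by_contra hrank
  obtain ⟨i, j, hij, hi, hj, hij1⟩ := hω.exists_pos_eigenvalues_of_rank_ne_one hrank
  set e := hω.1.1.eigenvectorBasis
  obtain ⟨α, β, hαβ, hPv⟩ :=
    hP.exists_norm_sq_add_norm_sq_eq_one_eval_eq_zero (by omega) ⇑(e i) ⇑(e j)
  set v := α • ⇑(e i) + β • ⇑(e j) with hv
  have hunit : star v ⬝ᵥ v = 1 := by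
    rw [hv, e.star_dotProduct_smul_add_smul hij, hαβ, RCLike.ofReal_one]
  set ε := min (hω.1.1.eigenvalues i) (hω.1.1.eigenvalues j)
  have hε0 : 0 < ε := lt_min hi hj
  have hε1 : ε < 1 := by
    have := add_le_add (min_le_left (hω.1.1.eigenvalues i) (hω.1.1.eigenvalues j))
      (min_le_right (hω.1.1.eigenvalues i) (hω.1.1.eigenvalues j))
    linarith
  obtain ⟨ω', hω', hωeq⟩ := hω.exists_eq_smul_vecMulVec_add_smul hunit hε1
    (hω.1.sub_smul_vecMulVec hij hε0.le (min_le_left _ _) (min_le_right _ _) hαβ hv)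
  obtain ⟨lam, ρL', hρL', hlt, hle, heq⟩ :=
    exists_zeroSet_weight_gt hρL hunit hPv hμ0 hμ1 hε0 hε1.le ω'
  have := hmax lam ρL' ω' hρL' hω' (hμ0.trans hlt.le) hle (by rw [hdecomp, hωeq, heq])
  linarith

theorem stmt_13 {n : ℕ} (P : MvPolynomial (Fin n) ℂ) (D : ℕ) (hD : 1 ≤ D)
    (hP : P.IsHomogeneous D) (ρ : Matrix (Fin n) (Fin n) ℂ)
    (hρ : IsDensityMatrix ρ) (μ : ℝ) (ρL ω : Matrix (Fin n) (Fin n) ℂ)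
    (hρL : ρL ∈ ZeroSet P) (hω : IsDensityMatrix ω)
    (hμ0 : 0 ≤ μ) (hμ1 : μ < 1)
    (hdecomp : ρ = ((μ : ℝ) : ℂ) • ρL + ((1 - μ : ℝ) : ℂ) • ω)
    (hmax : ∀ (lam : ℝ) (ρL' ω' : Matrix (Fin n) (Fin n) ℂ),
      ρL' ∈ ZeroSet P → IsDensityMatrix ω' → 0 ≤ lam → lam ≤ 1 →
      ρ = ((lam : ℝ) : ℂ) • ρL' + ((1 - lam : ℝ) : ℂ) • ω' → lam ≤ μ) :
    ω.rank = 1 :=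
  stmt_13_general P D hD hP ρ μ ρL ω hρL hω hμ0 hμ1 hdecomp hmax
end
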